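/- Let Ω be a bounded domain with upper Minkowski dimension M(∂Ω) = 2 − θ for some θ ∈ (0,1]. Fix θ' < θ. On a square grid of mesh δ, let n_k denote the number of grid boxes at distance kδ (i.e., k boxes) from ∂Ω and N_l = Σ_{k ≤ l} n_k. Then there is a constant C_{θ'} such that for all δ > 0 and all l ≥ 1, N_l ≤ C_{θ'} n^{2−θ'} l^{θ'}, where n = δ^{−1}. -/

import Mathlib

open Set Filter

/-- The grid box of mesh `δ` indexed by `p : ℤ × ℤ`. -/
def gridBox (δ : ℝ) (p : ℤ × ℤ) : Set ℂ :=
  {z : ℂ | z.re ∈ Set.Ico ((p.1 : ℝ) * δ) (((p.1 : ℝ) + 1) * δ) ∧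
           z.im ∈ Set.Ico ((p.2 : ℝ) * δ) (((p.2 : ℝ) + 1) * δ)}

/-- Number of grid boxes of mesh `δ` needed to cover `S` (those meeting `S`). -/
noncomputable def boxCount (δ : ℝ) (S : Set ℂ) : ℕ :=
  Set.ncard {p : ℤ × ℤ | (gridBox δ p ∩ S).Nonempty}

/-- The upper Minkowski dimension `M(S) = limsup_{δ→0⁺} log 𝒩(δ) / log(1/δ)`. -/
noncomputable def upperMinkDim (S : Set ℂ) : ℝ :=
  Filter.limsup (fun δ : ℝ => Real.log (boxCount δ S) / Real.log (1 / δ))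
    (nhdsWithin 0 (Set.Ioi 0))

/-- `N_l`: the number of mesh-`δ` grid boxes meeting `Ω` and lying within distance
`l·δ` of `∂Ω` (i.e. `Σ_{k ≤ l} n_k`). -/
noncomputable def nearBoundaryCount (Ω : Set ℂ) (δ : ℝ) (l : ℕ) : ℕ :=
  Set.ncard {p : ℤ × ℤ | (gridBox δ p ∩ Ω).Nonempty ∧
    ∃ z ∈ gridBox δ p, Metric.infDist z (frontier Ω) ≤ (l : ℝ) * δ}

/-!
A box of mesh `δ` within distance `l δ` of `∂Ω` lies within a `5l × 5l` block of fine boxes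
around the box of mesh `σ = l δ` containing a boundary point at distance `< 2σ`, so
`N_l ≤ 25 l² 𝒩(σ)`. For `σ` below some `σ₀` the dimension hypothesis gives
`𝒩(σ) ≤ σ^{-(2-θ')}`, and `l² σ^{-(2-θ')} = δ^{-(2-θ')} l^{θ'}`. For `σ ≥ σ₀` the trivial bound
`N_l = O(δ⁻²)` suffices, because `δ^{-θ'} ≤ (l / σ₀)^{θ'}`.
-/

open Metric Real Topology

lemma mem_Ico_mul_iff_floor_div_eq {δ x : ℝ} (hδ : 0 < δ) {m : ℤ} :
    x ∈ Ico ((m : ℝ) * δ) (((m : ℝ) + 1) * δ) ↔ ⌊x / δ⌋ = m := by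
  rw [Int.floor_eq_iff, le_div_iff₀ hδ, div_lt_iff₀ hδ]
  rfl

lemma mem_gridBox_iff {δ : ℝ} (hδ : 0 < δ) {z : ℂ} {p : ℤ × ℤ} :
    z ∈ gridBox δ p ↔ (⌊z.re / δ⌋, ⌊z.im / δ⌋) = p := by
  rw [gridBox, mem_ofPred_eq, mem_Ico_mul_iff_floor_div_eq hδ, mem_Ico_mul_iff_floor_div_eq hδ,
    Prod.ext_iff]

lemma setOf_gridBox_inter_nonempty_subset {δ R : ℝ} (hδ : 0 < δ) {S : Set ℂ}
    (hS : S ⊆ closedBall 0 R) :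
    {p : ℤ × ℤ | (gridBox δ p ∩ S).Nonempty} ⊆
      Icc ⌊-R / δ⌋ ⌊R / δ⌋ ×ˢ Icc ⌊-R / δ⌋ ⌊R / δ⌋ := by
  rintro p ⟨z, hz, hzS⟩
  rw [← (mem_gridBox_iff hδ).1 hz]
  have hzR : ‖z‖ ≤ R := mem_closedBall_zero_iff.1 (hS hzS)
  have floor_mem : ∀ x : ℝ, |x| ≤ R → ⌊x / δ⌋ ∈ Icc ⌊-R / δ⌋ ⌊R / δ⌋ := fun x hx =>
    ⟨Int.floor_mono (div_le_div_of_nonneg_right (abs_le.1 hx).1 hδ.le),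
      Int.floor_mono (div_le_div_of_nonneg_right (abs_le.1 hx).2 hδ.le)⟩
  exact ⟨floor_mem _ ((Complex.abs_re_le_norm z).trans hzR),
    floor_mem _ ((Complex.abs_im_le_norm z).trans hzR)⟩

lemma finite_setOf_gridBox_inter_nonempty {δ : ℝ} (hδ : 0 < δ) {S : Set ℂ}
    (hS : Bornology.IsBounded S) : {p : ℤ × ℤ | (gridBox δ p ∩ S).Nonempty}.Finite := by
  obtain ⟨R, hR⟩ := (isBounded_iff_subset_closedBall 0).1 hS
  exact ((finite_Icc _ _).prod (finite_Icc _ _)).subset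
    (setOf_gridBox_inter_nonempty_subset hδ hR)

lemma boxCount_le_of_subset_closedBall {δ R : ℝ} (hδ : 0 < δ) (hδ1 : δ ≤ 1) (hR : 0 ≤ R)
    {S : Set ℂ} (hS : S ⊆ closedBall 0 R) : (boxCount δ S : ℝ) ≤ ((2 * R + 2) / δ) ^ 2 := by
  set a := ⌊-R / δ⌋
  set b := ⌊R / δ⌋
  have hcount : boxCount δ S ≤ (b + 1 - a).toNat ^ 2 := by
    have h := ncard_le_ncard (setOf_gridBox_inter_nonempty_subset hδ hS)
      ((finite_Icc a b).prod (finite_Icc a b))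
    rwa [ncard_prod, ← Finset.coe_Icc, ncard_coe_finset, Int.card_Icc, ← sq] at h
  have hab : a ≤ b + 1 := by
    have : a ≤ b := Int.floor_mono (div_le_div_of_nonneg_right (by linarith) hδ.le)
    omega
  have hwidth : ((b + 1 - a : ℤ) : ℝ) ≤ (2 * R + 2) / δ := by
    have hb : (b : ℝ) ≤ R / δ := Int.floor_le _
    have ha : -(R / δ) - 1 < a := neg_div δ R ▸ Int.sub_one_lt_floor _
    have h2 : 2 ≤ 2 / δ := by rw [le_div_iff₀ hδ]; linarith
    rw [add_div, mul_div_assoc]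
    push_cast
    linarith
  calc (boxCount δ S : ℝ) ≤ (((b + 1 - a).toNat : ℕ) : ℝ) ^ 2 := by exact_mod_cast hcount
    _ = ((b + 1 - a : ℤ) : ℝ) ^ 2 := by
      rw [← Int.cast_natCast, Int.toNat_of_nonneg (by omega)]
    _ ≤ ((2 * R + 2) / δ) ^ 2 := by gcongr

lemma sub_mul_mem_Ico_of_abs_sub_lt {δ x y : ℝ} (hδ : 0 < δ) {l : ℕ} {m n : ℤ}
    (hx : x ∈ Ico ((m : ℝ) * δ) (((m : ℝ) + 1) * δ))
    (hy : y ∈ Ico ((n : ℝ) * (l * δ)) (((n : ℝ) + 1) * (l * δ)))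
    (hxy : |x - y| < 2 * (l * δ)) : m - l * n ∈ Ico (-2 * l : ℤ) (3 * l) := by
  obtain ⟨hxy₁, hxy₂⟩ := abs_lt.1 hxy
  have hupper : (m : ℝ) < (n + 3) * l :=
    lt_of_mul_lt_mul_right (by linarith [hx.1, hy.2] : (m : ℝ) * δ < (n + 3) * l * δ) hδ.le
  have hlower : (n : ℝ) * l < m + 1 + 2 * l :=
    lt_of_mul_lt_mul_right (by linarith [hx.2, hy.1] : (n : ℝ) * l * δ < (m + 1 + 2 * l) * δ)
      hδ.le
  have hupper' : m < (n + 3) * l := by exact_mod_cast hupper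
  have hlower' : n * l < m + 1 + 2 * l := by exact_mod_cast hlower
  constructor <;> linarith

lemma frontier_nonempty_of_isBounded {Ω : Set ℂ} (hΩ : Bornology.IsBounded Ω)
    (hne : Ω.Nonempty) : (frontier Ω).Nonempty :=
  nonempty_frontier_iff.2 ⟨hne, fun h => NormedSpace.unbounded_univ ℝ ℂ (h ▸ hΩ)⟩

lemma nearBoundaryCount_le_mul_boxCount {Ω : Set ℂ} (hΩ : Bornology.IsBounded Ω) {δ : ℝ}
    (hδ : 0 < δ) {l : ℕ} (hl : 1 ≤ l) :
    nearBoundaryCount Ω δ l ≤ boxCount (l * δ) (frontier Ω) * (5 * l) ^ 2 := by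
  rcases Ω.eq_empty_or_nonempty with rfl | hne
  · simp [nearBoundaryCount]
  set σ : ℝ := l * δ
  have hσ : 0 < σ := by positivity
  have hI : (Ico (-2 * l : ℤ) (3 * l)).ncard = 5 * l := by
    rw [← Finset.coe_Ico, ncard_coe_finset, Int.card_Ico]
    omega
  set I : Set ℤ := Ico (-2 * l) (3 * l)
  have hnear : ∀ p ∈ {p : ℤ × ℤ | (gridBox δ p ∩ Ω).Nonempty ∧
      ∃ z ∈ gridBox δ p, infDist z (frontier Ω) ≤ (l : ℝ) * δ}, ∃ q : ℤ × ℤ,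
      (gridBox σ q ∩ frontier Ω).Nonempty ∧ p.1 - l * q.1 ∈ I ∧ p.2 - l * q.2 ∈ I := by
    rintro p ⟨-, z, hz, hdist⟩
    obtain ⟨w, hw, hzw⟩ := (infDist_lt_iff (frontier_nonempty_of_isBounded hΩ hne)).1
      (hdist.trans_lt (by linarith : σ < 2 * σ))
    have hwq : w ∈ gridBox σ (⌊w.re / σ⌋, ⌊w.im / σ⌋) := (mem_gridBox_iff hσ).2 rfl
    refine ⟨_, ⟨w, hwq, hw⟩, sub_mul_mem_Ico_of_abs_sub_lt hδ hz.1 hwq.1 ?_,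
      sub_mul_mem_Ico_of_abs_sub_lt hδ hz.2 hwq.2 ?_⟩
    · exact (Complex.abs_re_le_norm (z - w)).trans_lt (by rwa [← dist_eq_norm])
    · exact (Complex.abs_im_le_norm (z - w)).trans_lt (by rwa [← dist_eq_norm])
  choose! q hq using hnear
  calc nearBoundaryCount Ω δ l
      ≤ ({q | (gridBox σ q ∩ frontier Ω).Nonempty} ×ˢ (I ×ˢ I)).ncard := by
        refine ncard_le_ncard_of_injOn (fun p => (q p, p.1 - l * (q p).1, p.2 - l * (q p).2))
          (fun p hp => hq p hp) (fun p _ p' _ h => ?_)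
          ((finite_setOf_gridBox_inter_nonempty hσ (hΩ.closure.subset frontier_subset_closure)).prod
            ((finite_Ico _ _).prod (finite_Ico _ _)))
        simp only [Prod.mk.injEq] at h
        obtain ⟨hqq, h₁, h₂⟩ := h
        rw [hqq] at h₁ h₂
        exact Prod.ext (by linarith) (by linarith)
    _ = boxCount σ (frontier Ω) * (5 * l) ^ 2 := by rw [ncard_prod, ncard_prod, hI, sq]; rfl

lemma isBoundedUnder_log_boxCount_div_log {S : Set ℂ} (hS : Bornology.IsBounded S) :
    IsBoundedUnder (· ≤ ·) (𝓝[>] 0)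
      (fun δ : ℝ => log (boxCount δ S) / log (1 / δ)) := by
  obtain ⟨R, hR, hSR⟩ := hS.subset_closedBall_lt 0 0
  refine ⟨4, eventually_map.2 ?_⟩
  filter_upwards [Ioo_mem_nhdsGT (show (0 : ℝ) < min 1 (1 / (2 * R + 2)) by positivity)]
    with δ ⟨hδ, hδ'⟩
  have hδ1 : δ < 1 := hδ'.trans_le (min_le_left _ _)
  have hRδ : 2 * R + 2 ≤ 1 / δ := by
    rw [le_div_iff₀ hδ, ← le_div_iff₀' (by positivity)]
    exact (hδ'.trans_le (min_le_right _ _)).le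
  have hlog : 0 < log (1 / δ) := log_pos (one_lt_one_div hδ hδ1)
  have hcount : (boxCount δ S : ℝ) ≤ (1 / δ) ^ 4 :=
    calc (boxCount δ S : ℝ) ≤ ((2 * R + 2) / δ) ^ 2 :=
          boxCount_le_of_subset_closedBall hδ hδ1.le hR.le hSR
      _ ≤ ((1 / δ) / δ) ^ 2 := by gcongr
      _ = (1 / δ) ^ 4 := by ring
  rw [div_le_iff₀ hlog]
  rcases (boxCount δ S).eq_zero_or_pos with h0 | hpos
  · simp only [h0, CharP.cast_eq_zero, log_zero]
    positivity
  · calc log (boxCount δ S) ≤ log ((1 / δ) ^ 4) := log_le_log (by exact_mod_cast hpos) hcount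
      _ = 4 * log (1 / δ) := by rw [log_pow]; norm_num

lemma eventually_boxCount_le_rpow {S : Set ℂ} (hS : Bornology.IsBounded S) {b : ℝ}
    (hb : upperMinkDim S < b) : ∀ᶠ σ in 𝓝[>] 0, (boxCount σ S : ℝ) ≤ (1 / σ) ^ b := by
  filter_upwards [eventually_lt_of_limsup_lt hb (isBoundedUnder_log_boxCount_div_log hS),
    Ioo_mem_nhdsGT one_pos] with σ hσb ⟨hσ, hσ1⟩
  have hlog : 0 < log (1 / σ) := log_pos (one_lt_one_div hσ hσ1)
  rcases (boxCount σ S).eq_zero_or_pos with h0 | hpos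
  · rw [h0, Nat.cast_zero]
    positivity
  · rw [le_rpow_iff_log_le (by exact_mod_cast hpos) (by positivity)]
    exact ((div_lt_iff₀ hlog).1 hσb).le

lemma nearBoundaryCount_le_of_boxCount_le {Ω : Set ℂ} (hΩ : Bornology.IsBounded Ω) {δ s : ℝ}
    (hδ : 0 < δ) {l : ℕ} (hl : 1 ≤ l)
    (hbox : (boxCount (l * δ) (frontier Ω) : ℝ) ≤ (1 / (l * δ)) ^ s) :
    (nearBoundaryCount Ω δ l : ℝ) ≤ 25 * (1 / δ) ^ s * (l : ℝ) ^ (2 - s) := by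
  have hl0 : (0 : ℝ) < l := by exact_mod_cast hl
  calc (nearBoundaryCount Ω δ l : ℝ) ≤ boxCount (l * δ) (frontier Ω) * (5 * l) ^ 2 := by
        exact_mod_cast nearBoundaryCount_le_mul_boxCount hΩ hδ hl
    _ ≤ (1 / (l * δ)) ^ s * (5 * l) ^ 2 := by gcongr
    _ = 25 * (1 / δ) ^ s * (l : ℝ) ^ (2 - s) := by
      rw [one_div, mul_inv, mul_rpow (inv_nonneg.2 hl0.le) (inv_nonneg.2 hδ.le), inv_rpow hl0.le,
        rpow_sub hl0, rpow_two, one_div]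
      field_simp
      ring

lemma nearBoundaryCount_le_boxCount {Ω : Set ℂ} (hΩ : Bornology.IsBounded Ω) {δ : ℝ}
    (hδ : 0 < δ) (l : ℕ) : nearBoundaryCount Ω δ l ≤ boxCount δ Ω :=
  ncard_le_ncard (fun _ hp => hp.1) (finite_setOf_gridBox_inter_nonempty hδ hΩ)

lemma nearBoundaryCount_le_of_le_mul {Ω : Set ℂ} {R δ σ₀ t : ℝ} (hR : 0 ≤ R)
    (hΩ : Ω ⊆ closedBall 0 R) (hδ : 0 < δ) (hδ1 : δ ≤ 1) (hσ₀ : 0 < σ₀) {l : ℕ}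
    (hσ₀l : σ₀ ≤ l * δ) (ht : 0 ≤ t) :
    (nearBoundaryCount Ω δ l : ℝ) ≤ (2 * R + 2) ^ 2 / σ₀ ^ t * (1 / δ) ^ (2 - t) * (l : ℝ) ^ t := by
  have hδl : 1 / δ ≤ l / σ₀ := by
    rw [div_le_div_iff₀ hδ hσ₀]
    linarith
  calc (nearBoundaryCount Ω δ l : ℝ) ≤ boxCount δ Ω := by
        exact_mod_cast nearBoundaryCount_le_boxCount (isBounded_closedBall.subset hΩ) hδ l
    _ ≤ ((2 * R + 2) / δ) ^ 2 := boxCount_le_of_subset_closedBall hδ hδ1 hR hΩ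
    _ = (2 * R + 2) ^ 2 * (1 / δ) ^ (2 - t) * (1 / δ) ^ t := by
      rw [mul_assoc, ← rpow_add (by positivity), sub_add_cancel, rpow_two]
      ring
    _ ≤ (2 * R + 2) ^ 2 * (1 / δ) ^ (2 - t) * (l / σ₀) ^ t := by gcongr
    _ = (2 * R + 2) ^ 2 / σ₀ ^ t * (1 / δ) ^ (2 - t) * (l : ℝ) ^ t := by
      rw [div_rpow (Nat.cast_nonneg l) hσ₀.le]
      ring

theorem near_boundary_box_count_general (Ω : Set ℂ) (hΩ : Bornology.IsBounded Ω)
    (θ θ' : ℝ) (hθ'0 : 0 < θ') (hθ' : θ' < θ)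
    (hM : upperMinkDim (frontier Ω) = 2 - θ) :
    ∃ C : ℝ, 0 < C ∧ ∀ δ ∈ Set.Ioo (0 : ℝ) 1, ∀ l : ℕ, 1 ≤ l →
      (nearBoundaryCount Ω δ l : ℝ) ≤ C * (1 / δ) ^ ((2 : ℝ) - θ') * (l : ℝ) ^ θ' := by
  obtain ⟨R, hR, hΩR⟩ := hΩ.subset_closedBall_lt 0 0
  have hdim : upperMinkDim (frontier Ω) < 2 - θ' := by linarith
  obtain ⟨σ₀, hσ₀ : 0 < σ₀, hbox⟩ := mem_nhdsGT_iff_exists_Ioo_subset.1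
    (eventually_boxCount_le_rpow (hΩ.closure.subset frontier_subset_closure) hdim)
  refine ⟨25 + (2 * R + 2) ^ 2 / σ₀ ^ θ', by positivity, fun δ ⟨hδ, hδ1⟩ l hl => ?_⟩
  rcases lt_or_ge ((l : ℝ) * δ) σ₀ with hsmall | hlarge
  · calc (nearBoundaryCount Ω δ l : ℝ) ≤ 25 * (1 / δ) ^ (2 - θ') * (l : ℝ) ^ (2 - (2 - θ')) :=
          nearBoundaryCount_le_of_boxCount_le hΩ hδ hl
            (hbox ⟨mul_pos (by exact_mod_cast hl) hδ, hsmall⟩)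
      _ ≤ _ := by
        rw [sub_sub_cancel]
        gcongr
        exact le_add_of_nonneg_right (by positivity)
  · calc (nearBoundaryCount Ω δ l : ℝ)
          ≤ (2 * R + 2) ^ 2 / σ₀ ^ θ' * (1 / δ) ^ (2 - θ') * (l : ℝ) ^ θ' :=
          nearBoundaryCount_le_of_le_mul hR.le hΩR hδ hδ1.le hσ₀ hlarge hθ'0.le
      _ ≤ _ := by
        gcongr
        exact le_add_of_nonneg_left (by norm_num)

/-- If `Ω` is bounded with `M(∂Ω) = 2 - θ` and `θ' < θ`, then there is a constant
`C_{θ'}` with `N_l ≤ C_{θ'} n^{2-θ'} l^{θ'}` for all meshes `δ` (with `n = δ⁻¹`) and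
all `l ≥ 1`. -/
theorem near_boundary_box_count (Ω : Set ℂ) (hΩ : Bornology.IsBounded Ω)
    (θ θ' : ℝ) (hθ : θ ∈ Set.Ioc (0 : ℝ) 1) (hθ'0 : 0 < θ') (hθ' : θ' < θ)
    (hM : upperMinkDim (frontier Ω) = 2 - θ) :
    ∃ C : ℝ, 0 < C ∧ ∀ δ ∈ Set.Ioo (0 : ℝ) 1, ∀ l : ℕ, 1 ≤ l →
      (nearBoundaryCount Ω δ l : ℝ) ≤ C * (1 / δ) ^ ((2 : ℝ) - θ') * (l : ℝ) ^ θ' :=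
  near_boundary_box_count_general Ω hΩ θ θ' hθ'0 hθ' hM
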